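/- Normalized divergence formula for trees: For two leaf distributions P_L and P_{L'} on the same tree with full support, D(P_L ‖ P_{L'})/E[w(L)] = Σ_{j∈B} P_B(j) · D(P_{S_j} ‖ P_{S'_j}), where P_B(j) = Q_j/E[w(L)] and E[w(L)] is the expected leaf depth under P_L. -/

import Mathlib

/-! Chain rule for divergence: grouping the leaves below a node by the child they lie under
splits `Σ aᵢ log (aᵢ/bᵢ)` into the divergence of the children's totals plus the
total-weighted divergence within each child. Unfolding this from the root gives
`D(P_L ‖ P_{L'}) = Q_root log (Q_root/Q'_root) + Σ_j Q_j D(P_{S_j} ‖ P_{S'_j})`, where the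
root term vanishes as both root probabilities are `1`; dividing by `E[w(L)]` turns `Q_j`
into `P_B(j)`. -/

/-- A finite rooted tree with data of type `α` at the leaves. -/
inductive PTree (α : Type) : Type where
  | leaf (a : α) : PTree α
  | node (n : ℕ) (children : Fin n → PTree α) : PTree α

namespace PTree

/-- Node probability `Q_j`: sum of the probabilities of the leaves below the node. -/
def Q {α : Type} (pr : α → ℝ) : PTree α → ℝ
  | .leaf a => pr a
  | .node n c => ∑ k : Fin n, Q pr (c k)

/-- All leaf probabilities are positive and every branching node has at least one
successor (so all node probabilities `Q_j` are positive). -/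
def pos {α : Type} (pr : α → ℝ) : PTree α → Prop
  | .leaf a => 0 < pr a
  | .node n c => 0 < n ∧ ∀ k : Fin n, pos pr (c k)

/-- Expected value `E[f(L)]` over the leaves; nodes are identified by their
address (list of child indices from the root). -/
def leafExp {α : Type} (pr : α → ℝ) (f : List ℕ → ℝ) : PTree α → List ℕ → ℝ
  | .leaf a, addr => pr a * f addr
  | .node n c, addr => ∑ k : Fin n, leafExp pr f (c k) (addr ++ [k.val])

/-- Informational divergence of the leaf distributions:
`D(P_L ‖ P_{L'}) = Σ_i P_L(i) log₂ (P_L(i)/P_{L'}(i))`. -/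
noncomputable def leafDiv {α : Type} (p q : α → ℝ) : PTree α → ℝ
  | .leaf a => p a * Real.logb 2 (p a / q a)
  | .node n c => ∑ k : Fin n, leafDiv p q (c k)

/-- `Σ_{j∈B} P_B(j) · D(P_{S_j} ‖ P_{S'_j})` with `P_B(j) = Q_j / W`. -/
noncomputable def branchDivNorm {α : Type} (p q : α → ℝ) (W : ℝ) : PTree α → ℝ
  | .leaf _ => 0
  | .node n c =>
      (Q p (.node n c) / W) *
        (∑ k : Fin n, (Q p (c k) / Q p (.node n c)) *
          Real.logb 2 ((Q p (c k) / Q p (.node n c)) / (Q q (c k) / Q q (.node n c))))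
      + ∑ k : Fin n, branchDivNorm p q W (c k)

theorem _root_.Finset.sum_mul_logb_div_eq {ι : Type*} (s : Finset ι) (a b : ι → ℝ)
    (hb : ∀ i ∈ s, b i ≠ 0) (hA : ∑ i ∈ s, a i ≠ 0) (hB : ∑ i ∈ s, b i ≠ 0) :
    ∑ i ∈ s, a i * Real.logb 2 (a i / b i)
      = (∑ i ∈ s, a i) * Real.logb 2 ((∑ i ∈ s, a i) / ∑ i ∈ s, b i)
        + (∑ i ∈ s, a i) * ∑ i ∈ s, (a i / ∑ j ∈ s, a j) *
            Real.logb 2 ((a i / ∑ j ∈ s, a j) / (b i / ∑ j ∈ s, b j)) := by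
  set A := ∑ i ∈ s, a i
  set B := ∑ i ∈ s, b i
  have hterm : ∀ i ∈ s, A * ((a i / A) * Real.logb 2 ((a i / A) / (b i / B)))
      = a i * Real.logb 2 (a i / b i) + a i * Real.logb 2 (B / A) := by
    intro i hi
    rcases eq_or_ne (a i) 0 with ha | ha
    · simp [ha]
    rw [show (a i / A) / (b i / B) = a i / b i * (B / A) by field_simp,
      Real.logb_mul (div_ne_zero ha (hb i hi)) (div_ne_zero hB hA)]
    field_simp
  rw [Finset.mul_sum, Finset.sum_congr rfl hterm, Finset.sum_add_distrib, ← Finset.sum_mul,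
    Real.logb_div hA hB, Real.logb_div hB hA]
  ring

lemma Q_pos {α : Type} {pr : α → ℝ} {t : PTree α} (h : pos pr t) : 0 < Q pr t := by
  induction t with
  | leaf a => exact h
  | node n c ih =>
    have : Nonempty (Fin n) := Fin.pos_iff_nonempty.mp h.1
    exact Finset.sum_pos (fun k _ => ih k (h.2 k)) Finset.univ_nonempty

lemma branchDivNorm_eq_div {α : Type} (p q : α → ℝ) (W : ℝ) (t : PTree α) :
    branchDivNorm p q W t = branchDivNorm p q 1 t / W := by
  induction t with
  | leaf a => simp [branchDivNorm]
  | node n c ih =>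
    simp only [branchDivNorm, ih, div_one, add_div, Finset.sum_div, div_mul_eq_mul_div]

lemma leafDiv_eq_mul_logb_add_branchDivNorm {α : Type} {p q : α → ℝ} {t : PTree α}
    (hp : pos p t) (hq : pos q t) :
    leafDiv p q t = Q p t * Real.logb 2 (Q p t / Q q t) + branchDivNorm p q 1 t := by
  induction t with
  | leaf a => simp [leafDiv, branchDivNorm, Q]
  | node n c ih =>
    simp only [leafDiv, branchDivNorm, div_one]
    rw [Finset.sum_congr rfl fun k _ => ih k (hp.2 k) (hq.2 k), Finset.sum_add_distrib,
      Finset.sum_mul_logb_div_eq _ _ _ (fun k _ => (Q_pos (hq.2 k)).ne')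
        (Q_pos hp).ne' (Q_pos hq).ne', add_assoc]
    rfl

theorem normalized_divergence_lemma_general {α : Type} (p q : α → ℝ) (t : PTree α)
    (hp : pos p t) (hq : pos q t) (hQp : Q p t = 1) (hQq : Q q t = 1) :
    leafDiv p q t / leafExp p (fun addr => (addr.length : ℝ)) t []
      = branchDivNorm p q (leafExp p (fun addr => (addr.length : ℝ)) t []) t := by
  rw [branchDivNorm_eq_div, leafDiv_eq_mul_logb_add_branchDivNorm hp hq, hQp, hQq]
  simp

/-- Normalized divergence formula:
`D(P_L ‖ P_{L'})/E[w(L)] = Σ_{j∈B} P_B(j) · D(P_{S_j} ‖ P_{S'_j})`. -/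
theorem normalized_divergence_lemma {α : Type} (p q : α → ℝ) (t : PTree α)
    (hp : pos p t) (hq : pos q t) (hQp : Q p t = 1) (hQq : Q q t = 1)
    (hW : 0 < leafExp p (fun addr => (addr.length : ℝ)) t []) :
    leafDiv p q t / leafExp p (fun addr => (addr.length : ℝ)) t []
      = branchDivNorm p q (leafExp p (fun addr => (addr.length : ℝ)) t []) t :=
  normalized_divergence_lemma_general p q t hp hq hQp hQq

end PTree
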